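/- Let C be cyclic of order 2^n, n ≥ 3, with involution ⊛ induced by a ↦ a^{2^{n-1}-1}. Let J^⊛ = { z z^⊛ : z ∈ V(F_2 C), z z^⊛ ∈ F_2 C² }. Then J^⊛ = ⟨a^{2^{n-1}}⟩ × S_⊛(C)², where S_⊛(C) is the group of ⊛-symmetric normalized units, and |S_⊛(C)²| = 2^{2^{n-2}-1}. -/

import Mathlib

open MonoidAlgebra Finset

noncomputable section

/-- The cyclic group of order `2^n`, written multiplicatively. -/
abbrev Cgrp (n : ℕ) : Type := Multiplicative (ZMod (2 ^ n))

/-- The group algebra `F₂C` of the cyclic group of order `2^n` over the field of two elements. -/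
abbrev FC (n : ℕ) : Type := MonoidAlgebra (ZMod 2) (Cgrp n)

/-- The augmentation map `χ : F₂C → F₂`. -/
def aug (n : ℕ) : FC n →ₐ[ZMod 2] ZMod 2 :=
  MonoidAlgebra.lift (ZMod 2) (ZMod 2) (Cgrp n) 1

/-- The generator `a` of the cyclic group `C`. -/
def agen (n : ℕ) : Cgrp n := Multiplicative.ofAdd (1 : ZMod (2 ^ n))

/-- The generator `a` viewed inside the group algebra `F₂C`. -/
def A (n : ℕ) : FC n := MonoidAlgebra.of (ZMod 2) (Cgrp n) (agen n)

/-- Group elements of `C` as elements of the group algebra. -/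
def Gel (n : ℕ) (i : ZMod (2 ^ n)) : FC n :=
  MonoidAlgebra.of (ZMod 2) (Cgrp n) (Multiplicative.ofAdd i)

/-- The involution `*` of `F₂C` induced by `a ↦ a⁻¹`. -/
def starOne (n : ℕ) : FC n ≃ₐ[ZMod 2] FC n :=
  MonoidAlgebra.domCongr (ZMod 2) (ZMod 2) (MulEquiv.inv (Cgrp n))

/-- The scalar `2^(n-1) - 1` in `ZMod (2^n)`. -/
def cf (n : ℕ) : ZMod (2 ^ n) := 2 ^ (n - 1) - 1

lemma two_pow_zmod (n : ℕ) : ((2 : ZMod (2 ^ n))) ^ n = 0 := by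
  have h : ((2 ^ n : ℕ) : ZMod (2 ^ n)) = 0 := ZMod.natCast_self _
  push_cast at h
  exact h

lemma cf_sq (n : ℕ) (hn : 2 ≤ n) : cf n * cf n = 1 := by
  have h0 := two_pow_zmod n
  have e1 : (2 : ZMod (2 ^ n)) ^ (n - 1) * 2 ^ (n - 1) = 0 := by
    rw [← pow_add]
    have h : n - 1 + (n - 1) = n + (n - 2) := by omega
    rw [h, pow_add, h0, zero_mul]
  have e2 : (2 : ZMod (2 ^ n)) * 2 ^ (n - 1) = 0 := by
    have h : (2 : ZMod (2 ^ n)) * 2 ^ (n - 1) = 2 ^ (n - 1 + 1) := (pow_succ' 2 (n-1)).symm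
    rw [h]
    have h' : n - 1 + 1 = n := by omega
    rw [h', h0]
  have key : cf n * cf n = 2 ^ (n - 1) * 2 ^ (n - 1) - 2 * 2 ^ (n - 1) + 1 := by
    unfold cf; ring
  rw [key, e1, e2]; ring

/-- The automorphism `z ↦ (2^(n-1)-1)·z` of `ZMod (2^n)`. -/
def thetaAdd (n : ℕ) (hn : 2 ≤ n) : ZMod (2 ^ n) ≃+ ZMod (2 ^ n) where
  toFun z := cf n * z
  invFun z := cf n * z
  left_inv z := by show cf n * (cf n * z) = z; rw [← mul_assoc, cf_sq n hn, one_mul]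
  right_inv z := by show cf n * (cf n * z) = z; rw [← mul_assoc, cf_sq n hn, one_mul]
  map_add' x y := mul_add _ _ _

/-- The automorphism `a ↦ a^(2^(n-1)-1)` of `C`. -/
def theta (n : ℕ) (hn : 2 ≤ n) : Cgrp n ≃* Cgrp n :=
  AddEquiv.toMultiplicative (thetaAdd n hn)

/-- The involution `⊛` of `F₂C` induced by `a ↦ a^(2^(n-1)-1)`. -/
def starTwo (n : ℕ) (hn : 2 ≤ n) : FC n ≃ₐ[ZMod 2] FC n :=
  MonoidAlgebra.domCongr (ZMod 2) (ZMod 2) (theta n hn)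

/-- The group `V(F₂C)` of normalized units, as a subgroup of the unit group of `F₂C`. -/
def Vgrp (n : ℕ) : Subgroup (FC n)ˣ where
  carrier := {u | aug n (↑u : FC n) = 1}
  one_mem' := by simp [Set.mem_setOf_eq]
  mul_mem' := by
    intro u v hu hv
    simp only [Set.mem_setOf_eq, Units.val_mul, map_mul] at *
    rw [hu, hv, one_mul]
  inv_mem' := by
    intro u hu
    simp only [Set.mem_setOf_eq] at *
    have h : aug n ((↑u : FC n) * (↑u⁻¹ : FC n)) = 1 := by
      rw [Units.mul_inv, map_one]
    rw [map_mul, hu, one_mul] at h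
    exact h

/-- The sum `Ĉ` of all elements of `C` inside the group algebra. -/
def hatC (n : ℕ) : FC n := ∑ g : Cgrp n, MonoidAlgebra.of (ZMod 2) (Cgrp n) g

/-- The sum `Ĉ²` of all elements of the subgroup `C²` of squares. -/
def hatCsq (n : ℕ) : FC n :=
  ∑ g ∈ Finset.image (fun h : Cgrp n => h * h) Finset.univ,
    MonoidAlgebra.of (ZMod 2) (Cgrp n) g

/-- The subspace `F₂C²` of `F₂C` spanned by the subgroup of squares. -/
def sqSpan (n : ℕ) : Submodule (ZMod 2) (FC n) :=
  Submodule.span (ZMod 2) (Set.range fun g : Cgrp n => MonoidAlgebra.of (ZMod 2) (Cgrp n) (g * g))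

lemma hatC_mul_hatC (n : ℕ) (hn : 1 ≤ n) : hatC n * hatC n = 0 := by
  classical
  unfold hatC
  rw [Finset.sum_mul_sum]
  have h1 : ∀ g : Cgrp n,
      ∑ h : Cgrp n, MonoidAlgebra.of (ZMod 2) (Cgrp n) g * MonoidAlgebra.of (ZMod 2) (Cgrp n) h
        = hatC n := by
    intro g
    have h2 : ∀ h : Cgrp n,
        MonoidAlgebra.of (ZMod 2) (Cgrp n) g * MonoidAlgebra.of (ZMod 2) (Cgrp n) h
          = MonoidAlgebra.of (ZMod 2) (Cgrp n) (g * h) := by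
      intro h; rw [map_mul]
    unfold hatC
    calc ∑ h : Cgrp n, MonoidAlgebra.of (ZMod 2) (Cgrp n) g * MonoidAlgebra.of (ZMod 2) (Cgrp n) h
        = ∑ h : Cgrp n, MonoidAlgebra.of (ZMod 2) (Cgrp n) (g * h) := by
          exact Finset.sum_congr rfl fun h _ => h2 h
      _ = ∑ h : Cgrp n, MonoidAlgebra.of (ZMod 2) (Cgrp n) h :=
          Fintype.sum_equiv (Equiv.mulLeft g) _ _ (fun h => rfl)
  calc (∑ g : Cgrp n, ∑ h : Cgrp n,
        MonoidAlgebra.of (ZMod 2) (Cgrp n) g * MonoidAlgebra.of (ZMod 2) (Cgrp n) h)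
      = ∑ _g : Cgrp n, hatC n := Finset.sum_congr rfl fun g _ => h1 g
    _ = (Fintype.card (Cgrp n)) • hatC n := by rw [Finset.sum_const, Finset.card_univ]
    _ = 0 := by
        rw [← Nat.cast_smul_eq_nsmul (ZMod 2)]
        have hc : ((Fintype.card (Cgrp n) : ℕ) : ZMod 2) = 0 := by
          have : Fintype.card (Cgrp n) = 2 ^ n := by simp [Cgrp, ZMod.card]
          rw [this]
          push_cast
          rw [show ((2:ZMod 2) = 0) from rfl, zero_pow (by omega)]
        rw [hc, zero_smul]

lemma add_self_FC (n : ℕ) (x : FC n) : x + x = 0 := by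
  rw [← two_smul (ZMod 2) x, show ((2:ZMod 2) = 0) from rfl, zero_smul]

/-- `1 + Ĉ` as a unit of `F₂C` (it is its own inverse). -/
def uC (n : ℕ) (hn : 1 ≤ n) : (FC n)ˣ :=
  ⟨1 + hatC n, 1 + hatC n, by
    have h : (1 + hatC n) * (1 + hatC n) = 1 + (hatC n + hatC n) + hatC n * hatC n := by ring
    rw [h, add_self_FC, hatC_mul_hatC n hn, add_zero, add_zero], by
    have h : (1 + hatC n) * (1 + hatC n) = 1 + (hatC n + hatC n) + hatC n * hatC n := by ring
    rw [h, add_self_FC, hatC_mul_hatC n hn, add_zero, add_zero]⟩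

/-!
Write `h = a^(2^(n-1))`. Over `F₂` squaring is additive, so `F₂C²` is exactly the set of
squares, and the coefficient of `w²` at `g²` is `w_g + w_{gh}`. The involution `⊛` inverts
the squares and fixes only `1` and `h`. Hence a `⊛`-symmetric `y ∈ F₂C²` with `y_1 = 1` and
`y_h = 0` is `1 + u + u^⊛` with `u = v²` supported on one element of each pair `{g, g⁻¹}`,
i.e. `y = (1 + v + v^⊛)²` is the square of a symmetric normalized unit. Conversely `s²` has
these coefficients for `s ∈ S_⊛(C)`, since `χ(s) = s_1 + s_h` and `⊛` swaps the two square
roots of `h`. This describes `S_⊛(C)²` by its coefficients, with one free bit for each pair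
`{g, g⁻¹}` of squares other than `1` and `h`, which gives its order. Finally a norm
`y = z z^⊛` satisfies `y_1 + y_h = χ(z) = 1`, so `y` or `h y` lies in `S_⊛(C)²`.
-/

namespace MonoidAlgebra

instance charP_of_charP {R G : Type*} [CommRing R] [Nontrivial R] [Monoid G] (p : ℕ) [CharP R p] :
    CharP (MonoidAlgebra R G) p :=
  charP_of_injective_algebraMap' R p

theorem exists_eq_add_domCongr {k G : Type*} [CommSemiring k] [Monoid G]
    (e : G ≃* G) (he : Function.Involutive e) {y : MonoidAlgebra k G}
    (hy : domCongr k k e y = y) (hfix : ∀ g, e g = g → y.coeff g = 0) :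
    ∃ u : MonoidAlgebra k G, u.coeff.support ⊆ y.coeff.support ∧
      y = u + domCongr k k e u := by
  classical
  let : LinearOrder G := IsWellOrder.linearOrder WellOrderingRel
  have hsymm : ∀ g, e.symm g = e g := fun g => e.symm_apply_eq.2 (he g).symm
  have hye : ∀ g, y.coeff (e g) = y.coeff g := fun g => by
    conv_rhs => rw [← hy]
    rw [coeff_domCongr, hsymm]
  -- keep `y` on one point of each free `e`-orbit, chosen by a well-order of `G`
  refine ⟨.ofCoeff (y.coeff.filter fun g => g < e g), ?_, ?_⟩
  · rw [coeff_ofCoeff, Finsupp.support_filter]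
    exact Finset.filter_subset _ _
  ext g
  rw [coeff_add, Finsupp.add_apply, coeff_domCongr, hsymm,
    coeff_ofCoeff, Finsupp.filter_apply, Finsupp.filter_apply, he g]
  rcases lt_trichotomy g (e g) with h | h | h
  · simp [h, h.not_gt]
  · simp [← h, hfix g h.symm]
  · simp [h, h.not_gt, hye]

section Squares

variable {G : Type*} [CommMonoid G]

lemma mul_self_eq_sum_single (x : MonoidAlgebra (ZMod 2) G) :
    x * x = x.coeff.sum fun g c => single (g * g) c := by
  conv_lhs => rw [← sum_coeff_single x]
  rw [← sq, Finsupp.sum, sum_pow_char]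
  refine Finset.sum_congr rfl fun g _ => ?_
  rw [single_pow, ZMod.pow_card, sq]

lemma coeff_mul_self [Fintype G] [DecidableEq G] (x : MonoidAlgebra (ZMod 2) G) (c : G) :
    (x * x).coeff c = ∑ g with g * g = c, x.coeff g := by
  rw [mul_self_eq_sum_single, Finsupp.sum_fintype _ _ fun g => single_zero (g * g), coeff_sum,
    Finset.sum_filter, Finsupp.finsetSum_apply]
  simp only [coeff_single, Finsupp.single_apply]

lemma isSquare_iff_mem_supported [Fintype G] (x : MonoidAlgebra (ZMod 2) G) :
    IsSquare x ↔ x ∈ supported (ZMod 2) (ZMod 2) {g : G | IsSquare g} := by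
  classical
  constructor
  · rintro ⟨w, rfl⟩
    refine mem_supported'.2 fun c hc => ?_
    rw [coeff_mul_self]
    exact Finset.sum_eq_zero fun g hg => absurd ⟨g, (Finset.mem_filter.1 hg).2.symm⟩ hc
  · intro hx
    rw [supported_eq_span_single] at hx
    induction hx using Submodule.span_induction with
    | mem y hy =>
      obtain ⟨g, ⟨r, rfl⟩, rfl⟩ := hy
      exact ⟨single r 1, by rw [single_mul_single, one_mul]⟩
    | zero => exact ⟨0, (mul_zero 0).symm⟩
    | add y z _ _ hy hz =>
      obtain ⟨u, rfl⟩ := hy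
      obtain ⟨v, rfl⟩ := hz
      exact ⟨u + v, by rw [← sq, ← sq, ← sq, add_pow_char]⟩
    | smul c y _ hy =>
      obtain ⟨u, rfl⟩ := hy
      refine ⟨c • u, ?_⟩
      rw [smul_mul_smul_comm, ← sq c, ZMod.pow_card]

end Squares

end MonoidAlgebra

lemma Finset.sum_eq_sum_filter_fixed {X R : Type*} [Fintype X] [DecidableEq X] [Ring R]
    [CharP R 2] (σ : X → X) (hσ : Function.Involutive σ) (f : X → R)
    (hf : ∀ x, f (σ x) = f x) : ∑ x, f x = ∑ x with σ x = x, f x := by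
  rw [← Finset.sum_filter_add_sum_filter_not Finset.univ (fun x => σ x = x), add_eq_left]
  refine Finset.sum_involution (fun x _ => σ x) (fun x _ => by rw [hf, CharTwo.add_self_eq_zero])
    (fun x hx _ => (Finset.mem_filter.1 hx).2) (fun x hx => ?_) (fun x _ => hσ x)
  simp only [Finset.mem_filter, Finset.mem_univ, true_and, hσ x] at hx ⊢
  exact Ne.symm hx

theorem Fintype.card_invariant_functions {X F : Type*} [Fintype X] [DecidableEq X] [Fintype F]
    (σ : X → X) (hσ : Function.Involutive σ) (W : Finset X) (hW : ∀ x ∈ W, σ x ∉ W)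
    (f₀ : X → F) (hf₀ : ∀ x, f₀ (σ x) = f₀ x) :
    Nat.card {f : X → F // (∀ x, f (σ x) = f x) ∧ ∀ x, x ∉ W → σ x ∉ W → f x = f₀ x} =
      Fintype.card F ^ W.card := by
  let extend (g : W → F) (x : X) : F :=
    if hx : x ∈ W then g ⟨x, hx⟩ else if hσx : σ x ∈ W then g ⟨σ x, hσx⟩ else f₀ x
  have extend_invariant (g : W → F) (x : X) : extend g (σ x) = extend g x := by
    by_cases hx : x ∈ W
    · simp [extend, hx, hW x hx, hσ x]
    · by_cases hσx : σ x ∈ W <;> simp [extend, hx, hσx, hσ x, hf₀]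
  let e : {f : X → F // (∀ x, f (σ x) = f x) ∧ ∀ x, x ∉ W → σ x ∉ W → f x = f₀ x} ≃ (W → F) :=
    { toFun := fun f x => f.1 x
      invFun := fun g => ⟨extend g, extend_invariant g, fun x hx hσx => by simp [extend, hx, hσx]⟩
      left_inv := by
        rintro ⟨f, hinv, hout⟩
        ext x
        by_cases hx : x ∈ W
        · simp [extend, hx]
        · by_cases hσx : σ x ∈ W
          · simp [extend, hx, hσx, hinv]
          · simp [extend, hx, hσx, hout x hx hσx]
      right_inv := fun g => by
        ext ⟨x, hx⟩
        simp [extend, hx] }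
  rw [Nat.card_congr e, Nat.card_eq_fintype_card, Fintype.card_fun, Fintype.card_coe]

lemma two_pow_eq_two_mul_two_pow_sub_one {k : ℕ} (hk : 1 ≤ k) : 2 ^ k = 2 * 2 ^ (k - 1) := by
  rw [← pow_succ', Nat.sub_add_cancel hk]

def ordTwo (n : ℕ) : Cgrp n := agen n ^ 2 ^ (n - 1)

namespace Cgrp

variable {n : ℕ}

lemma agen_pow (m : ℕ) : agen n ^ m = Multiplicative.ofAdd (m : ZMod (2 ^ n)) := by
  rw [agen, ← ofAdd_nsmul, nsmul_one]

lemma toAdd_ordTwo : (ordTwo n).toAdd = ((2 ^ (n - 1) : ℕ) : ZMod (2 ^ n)) := by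
  rw [ordTwo, agen_pow, toAdd_ofAdd]

lemma add_self_eq_zero_iff (hn : 1 ≤ n) {i : ZMod (2 ^ n)} :
    i + i = 0 ↔ i = 0 ∨ i = ((2 ^ (n - 1) : ℕ) : ZMod (2 ^ n)) := by
  obtain ⟨m, rfl⟩ : ∃ m, n = m + 1 := ⟨n - 1, by omega⟩
  rw [Nat.add_sub_cancel, ← ZMod.natCast_zmod_val i, ← Nat.cast_add, ZMod.natCast_eq_zero_iff,
    ← Nat.cast_zero, ZMod.natCast_eq_natCast_iff', ZMod.natCast_eq_natCast_iff']
  have hv : i.val < 2 ^ m * 2 := by simpa [pow_succ] using ZMod.val_lt i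
  have hm : 2 ^ m < 2 ^ (m + 1) := Nat.pow_lt_pow_right (by norm_num) (by omega)
  rw [Nat.zero_mod, Nat.mod_eq_of_lt (ZMod.val_lt i), Nat.mod_eq_of_lt hm]
  generalize i.val = v at hv ⊢
  rw [pow_succ]
  constructor
  · rintro ⟨c, hc⟩
    have hc' : v = 2 ^ m * c := by linarith
    have : c < 2 := by
      by_contra h
      nlinarith [Nat.one_le_two_pow (n := m)]
    interval_cases c <;> simp [hc']
  · rintro (h | h) <;> rw [h]
    · exact dvd_zero _
    · exact ⟨1, by ring⟩

lemma mul_self_eq_one_iff (hn : 1 ≤ n) {g : Cgrp n} : g * g = 1 ↔ g = 1 ∨ g = ordTwo n := by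
  simp only [← Multiplicative.toAdd.injective.eq_iff, toAdd_mul, toAdd_one, toAdd_ordTwo]
  exact add_self_eq_zero_iff hn

lemma ordTwo_ne_one (hn : 1 ≤ n) : ordTwo n ≠ 1 := by
  rw [Ne, ← Multiplicative.toAdd.injective.eq_iff, toAdd_ordTwo, toAdd_one,
    ZMod.natCast_eq_zero_iff]
  exact Nat.not_dvd_of_pos_of_lt (by positivity) (Nat.pow_lt_pow_right (by norm_num) (by omega))

lemma ordTwo_mul_self (hn : 1 ≤ n) : ordTwo n * ordTwo n = 1 :=
  (mul_self_eq_one_iff hn).2 (Or.inr rfl)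

lemma ordTwo_inv (hn : 1 ≤ n) : (ordTwo n)⁻¹ = ordTwo n :=
  inv_eq_of_mul_eq_one_right (ordTwo_mul_self hn)

lemma mul_self_eq_mul_self_iff (hn : 1 ≤ n) {g r : Cgrp n} :
    r * r = g * g ↔ r = g ∨ r = g * ordTwo n := by
  rw [← div_eq_one, ← div_mul_div_comm, mul_self_eq_one_iff hn, div_eq_one, div_eq_iff_eq_mul,
    mul_comm (ordTwo n)]

lemma isSquare_ordTwo (hn : 2 ≤ n) : IsSquare (ordTwo n) :=
  ⟨agen n ^ 2 ^ (n - 2), by rw [ordTwo, ← pow_add, ← two_mul, ← pow_succ']; congr 2; omega⟩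

lemma theta_apply (hn : 2 ≤ n) (g : Cgrp n) :
    theta n hn g = Multiplicative.ofAdd (cf n * g.toAdd) := rfl

lemma theta_theta (hn : 2 ≤ n) (g : Cgrp n) : theta n hn (theta n hn g) = g := by
  simp only [theta_apply, toAdd_ofAdd, ← mul_assoc, cf_sq n hn, one_mul, ofAdd_toAdd]

lemma theta_mul_self (hn : 2 ≤ n) (g : Cgrp n) : theta n hn (g * g) = (g * g)⁻¹ := by
  rw [theta_apply, ← ofAdd_toAdd (g * g)⁻¹, toAdd_inv, toAdd_mul]
  congr 1
  obtain ⟨m, rfl⟩ : ∃ m, n = m + 1 := ⟨n - 1, by omega⟩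
  simp only [cf, Nat.add_sub_cancel]
  linear_combination g.toAdd * two_pow_zmod (m + 1)

lemma theta_ordTwo (hn : 2 ≤ n) : theta n hn (ordTwo n) = ordTwo n := by
  obtain ⟨q, hq⟩ := isSquare_ordTwo hn
  rw [hq, theta_mul_self, ← hq, ordTwo_inv (by omega)]

lemma theta_inv (hn : 2 ≤ n) (g : Cgrp n) :
    theta n hn g⁻¹ = g ∨ theta n hn g⁻¹ = g * ordTwo n :=
  (mul_self_eq_mul_self_iff (by omega)).1 (by rw [← map_mul, theta_mul_self, mul_inv, inv_inv])

lemma theta_eq_self_iff (hn : 3 ≤ n) (g : Cgrp n) :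
    theta n (Nat.le_of_succ_le hn) g = g ↔ g = 1 ∨ g = ordTwo n := by
  rw [← mul_self_eq_one_iff (by omega), theta_apply, ← Multiplicative.toAdd.injective.eq_iff,
    ← Multiplicative.toAdd.injective.eq_iff, toAdd_ofAdd, toAdd_mul, toAdd_one]
  obtain ⟨m, rfl⟩ : ∃ m, n = m + 3 := ⟨n - 3, by omega⟩
  have hu : IsUnit (1 - (2 : ZMod (2 ^ (m + 3))) ^ (m + 1)) :=
    IsNilpotent.isUnit_one_sub ⟨m + 3, by
      rw [← pow_mul, mul_comm, pow_mul, two_pow_zmod, zero_pow (by omega)]⟩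
  have key : cf (m + 3) * g.toAdd - g.toAdd = -((g.toAdd + g.toAdd) * (1 - 2 ^ (m + 1))) := by
    simp only [cf, show m + 3 - 1 = m + 2 by omega]
    ring
  rw [← sub_eq_zero, key, neg_eq_zero, hu.mul_left_eq_zero]

lemma theta_of_mul_self_eq_ordTwo (hn : 3 ≤ n) {g : Cgrp n} (hg : g * g = ordTwo n) :
    theta n (Nat.le_of_succ_le hn) g = g * ordTwo n := by
  have h2 : theta n (Nat.le_of_succ_le hn) g * theta n (Nat.le_of_succ_le hn) g = g * g := by
    rw [← map_mul, hg, theta_ordTwo]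
  refine ((mul_self_eq_mul_self_iff (by omega)).1 h2).resolve_left fun hfix => ?_
  have h1 : g * g = 1 := (mul_self_eq_one_iff (by omega)).2 ((theta_eq_self_iff hn g).1 hfix)
  exact ordTwo_ne_one (by omega) (hg.symm.trans h1)

lemma agen_mul_theta_agen (hn : 2 ≤ n) : agen n * theta n hn (agen n) = ordTwo n := by
  rw [theta_apply, ordTwo, agen_pow, agen, ← ofAdd_add, toAdd_ofAdd]
  congr 1
  simp only [cf]
  push_cast
  ring

lemma isSquare_iff_even_val (hn : 1 ≤ n) (g : Cgrp n) : IsSquare g ↔ Even g.toAdd.val := by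
  constructor
  · rintro ⟨r, rfl⟩
    rw [toAdd_mul, ZMod.val_add, Nat.even_iff, Nat.mod_mod_of_dvd _ (dvd_pow_self 2 (by omega))]
    omega
  · rintro ⟨k, hk⟩
    refine ⟨Multiplicative.ofAdd (k : ZMod (2 ^ n)), ?_⟩
    rw [← ofAdd_add, ← Nat.cast_add, ← hk, ZMod.natCast_zmod_val, ofAdd_toAdd]

end Cgrp

section SquareWindow

variable {n : ℕ}

open Cgrp

/-- One element of each pair `{g, g⁻¹}` of squares other than `1` and `ordTwo n`. -/
def sqWindow (n : ℕ) : Finset (Cgrp n) :=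
  {g | Even g.toAdd.val ∧ 0 < g.toAdd.val ∧ g.toAdd.val < 2 ^ (n - 1)}

lemma mem_sqWindow {g : Cgrp n} :
    g ∈ sqWindow n ↔ Even g.toAdd.val ∧ 0 < g.toAdd.val ∧ g.toAdd.val < 2 ^ (n - 1) := by
  simp [sqWindow]

lemma val_toAdd_inv (g : Cgrp n) (hg : g ≠ 1) : (g⁻¹).toAdd.val = 2 ^ n - g.toAdd.val := by
  rw [toAdd_inv, ZMod.neg_val, if_neg (by simpa using hg)]

lemma inv_notMem_sqWindow {g : Cgrp n} (hg : g ∈ sqWindow n) : g⁻¹ ∉ sqWindow n := by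
  rw [mem_sqWindow] at hg ⊢
  have hn : 1 ≤ n := Nat.pos_of_ne_zero fun h => by simp [h] at hg
  have hne : g ≠ 1 := fun h => by simp [h] at hg
  rw [val_toAdd_inv g hne]
  have := two_pow_eq_two_mul_two_pow_sub_one hn
  omega

lemma notMem_sqWindow_of_inv_eq_self {g : Cgrp n} (hg : g⁻¹ = g) : g ∉ sqWindow n :=
  fun h => inv_notMem_sqWindow h (hg.symm ▸ h)

lemma eq_one_or_ordTwo_of_notMem_sqWindow (hn : 1 ≤ n) {g : Cgrp n} (hsq : IsSquare g)
    (h1 : g ∉ sqWindow n) (h2 : g⁻¹ ∉ sqWindow n) : g = 1 ∨ g = ordTwo n := by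
  by_cases hg : g = 1
  · exact Or.inl hg
  right
  have hev := (isSquare_iff_even_val hn g).1 hsq
  have hev' := (isSquare_iff_even_val hn g⁻¹).1 hsq.inv
  rw [mem_sqWindow] at h1 h2
  rw [val_toAdd_inv g hg] at h2 hev'
  simp only [hev, hev', true_and] at h1 h2
  have hpos : 0 < g.toAdd.val := Nat.pos_of_ne_zero (by simpa using hg)
  have hlt := ZMod.val_lt g.toAdd
  have := two_pow_eq_two_mul_two_pow_sub_one hn
  have hval : g.toAdd.val = 2 ^ (n - 1) := by omega
  rw [← ofAdd_toAdd g, ← ZMod.natCast_zmod_val g.toAdd, hval, ordTwo, agen_pow]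

lemma card_sqWindow (hn : 2 ≤ n) : #(sqWindow n) = 2 ^ (n - 2) - 1 := by
  have h1 := two_pow_eq_two_mul_two_pow_sub_one (k := n) (by omega)
  have h2 : 2 ^ (n - 1) = 2 * 2 ^ (n - 2) := by
    rw [two_pow_eq_two_mul_two_pow_sub_one (k := n - 1) (by omega), Nat.sub_sub]
  have hval : ∀ k < 2 ^ (n - 1),
      (Multiplicative.ofAdd ((2 * k : ℕ) : ZMod (2 ^ n))).toAdd.val = 2 * k :=
    fun k hk => ZMod.val_natCast_of_lt (by omega)
  rw [← Nat.sub_zero (2 ^ (n - 2)), ← Nat.card_Ioo]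
  refine (Finset.card_nbij' (fun k => Multiplicative.ofAdd ((2 * k : ℕ) : ZMod (2 ^ n)))
    (fun g => g.toAdd.val / 2) ?_ ?_ ?_ ?_).symm
  · intro k hk
    simp only [Finset.coe_Ioo, Set.mem_Ioo, Finset.mem_coe, mem_sqWindow] at hk ⊢
    rw [hval k (by omega)]
    exact ⟨even_two_mul k, by omega, by omega⟩
  · intro g hg
    simp only [Finset.coe_Ioo, Set.mem_Ioo, Finset.mem_coe, mem_sqWindow] at hg ⊢
    obtain ⟨⟨m, hm⟩, _, _⟩ := hg
    omega
  · intro k hk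
    simp only [Finset.coe_Ioo, Set.mem_Ioo] at hk
    simp only [hval k (by omega)]
    omega
  · intro g hg
    simp only [Finset.mem_coe, mem_sqWindow] at hg
    obtain ⟨⟨m, hm⟩, _, _⟩ := hg
    dsimp only
    rw [show 2 * (g.toAdd.val / 2) = g.toAdd.val by omega, ZMod.natCast_zmod_val, ofAdd_toAdd]

end SquareWindow

section GroupAlgebra

variable {n : ℕ}

open Cgrp

lemma sqSpan_eq_supported :
    sqSpan n = MonoidAlgebra.supported (ZMod 2) (ZMod 2) {g : Cgrp n | IsSquare g} := by
  rw [MonoidAlgebra.supported_eq_span_single, sqSpan]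
  congr 1
  ext x
  constructor
  · rintro ⟨r, rfl⟩
    exact ⟨r * r, ⟨r, rfl⟩, rfl⟩
  · rintro ⟨_, ⟨r, rfl⟩, rfl⟩
    exact ⟨r, rfl⟩

lemma mem_sqSpan_iff (y : FC n) : y ∈ sqSpan n ↔ IsSquare y := by
  rw [sqSpan_eq_supported, MonoidAlgebra.isSquare_iff_mem_supported]

lemma coeff_starTwo (hn : 2 ≤ n) (x : FC n) (g : Cgrp n) :
    (starTwo n hn x).coeff g = x.coeff (theta n hn g) :=
  MonoidAlgebra.coeff_domCongr _ _ _

lemma starTwo_starTwo (hn : 2 ≤ n) (x : FC n) : starTwo n hn (starTwo n hn x) = x := by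
  ext g
  rw [coeff_starTwo, coeff_starTwo, theta_theta]

lemma coeff_mul_self_mul_self (hn : 1 ≤ n) (x : FC n) (g : Cgrp n) :
    (x * x).coeff (g * g) = x.coeff g + x.coeff (g * ordTwo n) := by
  classical
  have hroots : ({r | r * r = g * g} : Finset (Cgrp n)) = {g, g * ordTwo n} := by
    ext r
    simp [mul_self_eq_mul_self_iff hn]
  rw [MonoidAlgebra.coeff_mul_self, hroots, Finset.sum_pair]
  simpa using ordTwo_ne_one hn

lemma coeff_mul_eq_sum (x y : FC n) (c : Cgrp n) :
    (x * y).coeff c = ∑ g, x.coeff g * y.coeff (g⁻¹ * c) := by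
  rw [MonoidAlgebra.coeff_mul_apply_left, Finsupp.sum_fintype _ _ (by simp)]

lemma aug_eq_sum (x : FC n) : aug n x = ∑ g, x.coeff g := by
  rw [aug, MonoidAlgebra.lift_apply, Finsupp.sum_fintype _ _ (by simp)]
  simp

lemma aug_starTwo (hn : 2 ≤ n) (x : FC n) : aug n (starTwo n hn x) = aug n x := by
  rw [aug_eq_sum, aug_eq_sum]
  exact Fintype.sum_equiv (theta n hn) _ _ fun g => coeff_starTwo hn x g

lemma pow_two_pow_eq_aug (x : FC n) : x ^ 2 ^ n = algebraMap (ZMod 2) (FC n) (aug n x) := by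
  have hfrob : iterateFrobenius (FC n) 2 n =
      (algebraMap (ZMod 2) (FC n)).comp (aug n : FC n →+* ZMod 2) := by
    refine MonoidAlgebra.ringHom_ext (fun r => ?_) (fun g => ?_)
    · simp [iterateFrobenius_def, MonoidAlgebra.single_pow, ZMod.pow_card_pow, aug]
    · have hg : g ^ 2 ^ n = 1 := by simpa [Cgrp] using pow_card_eq_one' (G := Cgrp n) (x := g)
      simp [iterateFrobenius_def, MonoidAlgebra.single_pow, aug, hg]
  rw [← iterateFrobenius_def, hfrob]
  rfl

lemma isUnit_of_aug_eq_one {x : FC n} (hx : aug n x = 1) : IsUnit x :=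
  IsUnit.of_pow_eq_one (by rw [pow_two_pow_eq_aug, hx, map_one]) (by positivity)

lemma aug_eq_of_starTwo_eq_self (hn : 3 ≤ n) {s : FC n}
    (hs : starTwo n (Nat.le_of_succ_le hn) s = s) :
    aug n s = s.coeff 1 + s.coeff (ordTwo n) := by
  classical
  have hfixed : ({g | theta n (Nat.le_of_succ_le hn) g = g} : Finset (Cgrp n)) = {1, ordTwo n} := by
    ext g
    simp [theta_eq_self_iff hn]
  rw [aug_eq_sum, Finset.sum_eq_sum_filter_fixed (theta n (Nat.le_of_succ_le hn)) (theta_theta _) _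
    fun g => by rw [← coeff_starTwo, hs], hfixed, Finset.sum_pair (ordTwo_ne_one (by omega)).symm]

lemma coeff_mul_starTwo_add_coeff (hn : 2 ≤ n) (z : FC n) :
    (z * starTwo n hn z).coeff 1 + (z * starTwo n hn z).coeff (ordTwo n) = aug n z := by
  classical
  have hn1 : 1 ≤ n := by omega
  have hpair : ∀ g, (starTwo n hn z).coeff (g⁻¹ * 1) + (starTwo n hn z).coeff (g⁻¹ * ordTwo n)
      = z.coeff g + z.coeff (g * ordTwo n) := by
    intro g
    rw [coeff_starTwo, coeff_starTwo, mul_one, map_mul, theta_ordTwo]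
    rcases theta_inv hn g with h | h <;> rw [h]
    rw [mul_assoc, ordTwo_mul_self hn1, mul_one, add_comm]
  have hcross : ∑ g, z.coeff g * z.coeff (g * ordTwo n) = 0 := by
    rw [Finset.sum_eq_sum_filter_fixed (· * ordTwo n)
      (fun g => by simp [mul_assoc, ordTwo_mul_self hn1]) _
      fun g => by rw [mul_assoc, ordTwo_mul_self hn1, mul_one, mul_comm]]
    refine Finset.sum_eq_zero fun g hg => absurd (Finset.mem_filter.1 hg).2 ?_
    simpa using ordTwo_ne_one hn1
  calc _ = ∑ g, z.coeff g * (z.coeff g + z.coeff (g * ordTwo n)) := by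
        rw [coeff_mul_eq_sum, coeff_mul_eq_sum, ← Finset.sum_add_distrib]
        simp only [← mul_add, hpair]
    _ = aug n z := by
        simp only [mul_add, Finset.sum_add_distrib, hcross, ← sq, ZMod.pow_card, add_zero,
          aug_eq_sum]

end GroupAlgebra

section SymmetricSquares

variable {n : ℕ}

open Cgrp

lemma exists_symm_sqrt (hn : 3 ≤ n) {y : FC n} (hy : y ∈ sqSpan n)
    (hys : starTwo n (Nat.le_of_succ_le hn) y = y) (h1 : y.coeff 1 = 1)
    (hh : y.coeff (ordTwo n) = 0) :
    ∃ s : FC n, aug n s = 1 ∧ starTwo n (Nat.le_of_succ_le hn) s = s ∧ y = s * s := by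
  have hn2 : 2 ≤ n := by omega
  have hsymm : starTwo n hn2 (y - 1) = y - 1 := by rw [map_sub, hys, map_one]
  have hfix : ∀ g, theta n hn2 g = g → (y - 1).coeff g = 0 := by
    intro g hg
    rcases (theta_eq_self_iff hn g).1 hg with rfl | rfl
    · simp [h1]
    · simp [hh, MonoidAlgebra.one_def, ordTwo_ne_one (n := n) (by omega)]
  obtain ⟨u, hu_supp, hu⟩ :=
    MonoidAlgebra.exists_eq_add_domCongr (theta n hn2) (theta_theta hn2) hsymm hfix
  have hy1 : y - 1 ∈ sqSpan n := sub_mem hy ((mem_sqSpan_iff 1).2 ⟨1, (mul_one 1).symm⟩)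
  rw [sqSpan_eq_supported, MonoidAlgebra.mem_supported] at hy1
  obtain ⟨v, rfl⟩ : IsSquare u := by
    rw [MonoidAlgebra.isSquare_iff_mem_supported, MonoidAlgebra.mem_supported]
    exact (Finset.coe_subset.2 hu_supp).trans hy1
  refine ⟨1 + v + starTwo n hn2 v, ?_, ?_, ?_⟩
  · rw [map_add, map_add, aug_starTwo, map_one, add_assoc, CharTwo.add_self_eq_zero, add_zero]
  · rw [map_add, map_add, starTwo_starTwo, map_one, add_assoc, add_comm (starTwo n hn2 v),
      ← add_assoc]
  · rw [← sq, add_pow_char, add_pow_char, one_pow, sq, sq, ← map_mul, add_assoc]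
    exact (eq_add_of_sub_eq' hu).trans (by rfl)

/-- `S_⊛(C)²` in the notation of the paper. -/
def symmSq (n : ℕ) (hn : 2 ≤ n) : Set (FC n) :=
  {y | ∃ s : (FC n)ˣ, aug n (↑s : FC n) = 1 ∧ starTwo n hn (↑s : FC n) = ↑s ∧ y = (↑s : FC n) * ↑s}

lemma mem_symmSq_iff (hn : 3 ≤ n) {y : FC n} :
    y ∈ symmSq n (Nat.le_of_succ_le hn) ↔ y ∈ sqSpan n ∧
      starTwo n (Nat.le_of_succ_le hn) y = y ∧ y.coeff 1 = 1 ∧ y.coeff (ordTwo n) = 0 := by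
  constructor
  · rintro ⟨s, hs1, hss, rfl⟩
    obtain ⟨q, hq⟩ := isSquare_ordTwo (n := n) (by omega)
    refine ⟨(mem_sqSpan_iff _).2 ⟨s, rfl⟩, by rw [map_mul, hss], ?_, ?_⟩
    · rw [← mul_one (1 : Cgrp n), coeff_mul_self_mul_self (by omega), one_mul,
        ← aug_eq_of_starTwo_eq_self hn hss, hs1]
    · rw [hq, coeff_mul_self_mul_self (by omega), ← theta_of_mul_self_eq_ordTwo hn hq.symm,
        ← coeff_starTwo, hss, CharTwo.add_self_eq_zero]
  · rintro ⟨hy, hys, h1, hh⟩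
    obtain ⟨s, hs1, hss, rfl⟩ := exists_symm_sqrt hn hy hys h1 hh
    exact ⟨(isUnit_of_aug_eq_one hs1).unit, hs1, hss, rfl⟩

end SymmetricSquares

section CountingSymmSq

variable {n : ℕ}

open Cgrp MonoidAlgebra

lemma starTwo_eq_self_iff_of_mem_sqSpan (hn : 2 ≤ n) {y : FC n} (hy : y ∈ sqSpan n) :
    starTwo n hn y = y ↔ ∀ g, y.coeff g⁻¹ = y.coeff g := by
  rw [sqSpan_eq_supported, mem_supported'] at hy
  rw [MonoidAlgebra.ext_iff, Finsupp.ext_iff]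
  refine forall_congr' fun g => ?_
  rw [coeff_starTwo]
  by_cases hg : IsSquare g
  · obtain ⟨r, rfl⟩ := hg
    rw [theta_mul_self]
  · have hθ : ¬IsSquare (theta n hn g) := fun ⟨r, hr⟩ =>
      hg ⟨theta n hn r, by rw [← map_mul, ← hr, theta_theta]⟩
    have hinv : ¬IsSquare g⁻¹ := fun h => hg (by simpa using h.inv)
    rw [hy _ hθ, hy _ hg, hy _ hinv]

lemma mem_symmSq_iff_coeff (hn : 3 ≤ n) (y : FC n) :
    y ∈ symmSq n (Nat.le_of_succ_le hn) ↔ (∀ g, y.coeff g⁻¹ = y.coeff g) ∧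
      ∀ g, g ∉ sqWindow n → g⁻¹ ∉ sqWindow n → y.coeff g = if g = 1 then 1 else 0 := by
  have hW1 : (1 : Cgrp n) ∉ sqWindow n := notMem_sqWindow_of_inv_eq_self inv_one
  have hWh : ordTwo n ∉ sqWindow n := notMem_sqWindow_of_inv_eq_self (ordTwo_inv (by omega))
  have hWsq : ∀ g ∈ sqWindow n, IsSquare g := fun g hg =>
    (isSquare_iff_even_val (by omega) g).2 (mem_sqWindow.1 hg).1
  rw [mem_symmSq_iff hn]
  constructor
  · rintro ⟨hy, hys, h1, hh⟩
    refine ⟨(starTwo_eq_self_iff_of_mem_sqSpan _ hy).1 hys, fun g hg hg' => ?_⟩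
    by_cases hsq : IsSquare g
    · rcases eq_one_or_ordTwo_of_notMem_sqWindow (by omega) hsq hg hg' with rfl | rfl
      · simp [h1]
      · simp [hh, ordTwo_ne_one (n := n) (by omega)]
    · rw [sqSpan_eq_supported, mem_supported'] at hy
      rw [hy g hsq, if_neg (by rintro rfl; exact hsq IsSquare.one)]
  · rintro ⟨hinv, hout⟩
    have hy : y ∈ sqSpan n := by
      rw [sqSpan_eq_supported, mem_supported']
      intro g hg
      rw [hout g (fun h => hg (hWsq g h)) (fun h => hg (by simpa using (hWsq _ h).inv)),
        if_neg (by rintro rfl; exact hg IsSquare.one)]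
    refine ⟨hy, (starTwo_eq_self_iff_of_mem_sqSpan _ hy).2 hinv, ?_, ?_⟩
    · rw [hout 1 hW1 (by rwa [inv_one]), if_pos rfl]
    · rw [hout _ hWh (by rwa [ordTwo_inv (by omega)]), if_neg (ordTwo_ne_one (by omega))]

lemma card_symmSq (hn : 3 ≤ n) :
    Nat.card (symmSq n (Nat.le_of_succ_le hn)) = 2 ^ (2 ^ (n - 2) - 1) := by
  classical
  let e : FC n ≃ (Cgrp n → ZMod 2) := MonoidAlgebra.coeffEquiv.trans Finsupp.equivFunOnFinite
  rw [Nat.card_congr (e.subtypeEquiv (q := fun f => (∀ g, f g⁻¹ = f g) ∧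
      ∀ g, g ∉ sqWindow n → g⁻¹ ∉ sqWindow n → f g = if g = 1 then 1 else 0)
      fun y => mem_symmSq_iff_coeff hn y),
    Fintype.card_invariant_functions (·⁻¹) inv_involutive (sqWindow n)
      (fun g hg => inv_notMem_sqWindow hg) _ (fun g => by simp),
    ZMod.card, card_sqWindow (by omega)]

end CountingSymmSq

section NormsOfUnits

variable {n : ℕ}

open Cgrp MonoidAlgebra

lemma isSquare_single_ordTwo (hn : 2 ≤ n) : IsSquare (single (ordTwo n) 1 : FC n) := by
  obtain ⟨q, hq⟩ := isSquare_ordTwo hn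
  exact ⟨single q 1, by rw [single_mul_single, hq, one_mul]⟩

lemma A_mul_starTwo_A (hn : 2 ≤ n) : A n * starTwo n hn (A n) = single (ordTwo n) 1 := by
  rw [A, of_apply, starTwo, domCongr_single, single_mul_single, one_mul, agen_mul_theta_agen]

lemma mem_symmSq_or_ordTwo_mul_mem (hn : 3 ≤ n) {y : FC n} (hy : y ∈ sqSpan n)
    (hys : starTwo n (Nat.le_of_succ_le hn) y = y)
    (hnorm : y.coeff 1 + y.coeff (ordTwo n) = 1) :
    y ∈ symmSq n (Nat.le_of_succ_le hn) ∨
      single (ordTwo n) 1 * y ∈ symmSq n (Nat.le_of_succ_le hn) := by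
  have hcases : ∀ a b : ZMod 2, a + b = 1 → a = 1 ∧ b = 0 ∨ a = 0 ∧ b = 1 := by decide
  rcases hcases _ _ hnorm with ⟨h1, hh⟩ | ⟨h1, hh⟩
  · exact Or.inl ((mem_symmSq_iff hn).2 ⟨hy, hys, h1, hh⟩)
  · refine Or.inr ((mem_symmSq_iff hn).2 ⟨?_, ?_, ?_, ?_⟩)
    · exact (mem_sqSpan_iff _).2
        ((isSquare_single_ordTwo (by omega)).mul ((mem_sqSpan_iff y).1 hy))
    · rw [map_mul, hys, starTwo, domCongr_single, theta_ordTwo]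
    · rw [coeff_single_mul_apply, ordTwo_inv (by omega), mul_one, one_mul, hh]
    · rw [coeff_single_mul_apply, ordTwo_inv (by omega), ordTwo_mul_self (by omega), one_mul, h1]

lemma exists_eq_ordTwo_pow_mul_of_norm_mem_sqSpan (hn : 3 ≤ n) {z : FC n} (hz : aug n z = 1)
    (hy : z * starTwo n (Nat.le_of_succ_le hn) z ∈ sqSpan n) :
    ∃ (k : ℕ) (s : (FC n)ˣ), aug n (↑s : FC n) = 1 ∧
      starTwo n (Nat.le_of_succ_le hn) (↑s : FC n) = ↑s ∧
      z * starTwo n (Nat.le_of_succ_le hn) z =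
        single (ordTwo n) 1 ^ k * ((s : FC n) * (s : FC n)) := by
  have hys : starTwo n (Nat.le_of_succ_le hn) (z * starTwo n (Nat.le_of_succ_le hn) z) =
      z * starTwo n (Nat.le_of_succ_le hn) z := by
    rw [map_mul, starTwo_starTwo, mul_comm]
  rcases mem_symmSq_or_ordTwo_mul_mem hn hy hys ((coeff_mul_starTwo_add_coeff _ _).trans hz) with
    ⟨s, hs1, hss, hs⟩ | ⟨s, hs1, hss, hs⟩
  · exact ⟨0, s, hs1, hss, by rw [pow_zero, one_mul, hs]⟩
  · refine ⟨1, s, hs1, hss, ?_⟩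
    rw [pow_one, ← hs, ← mul_assoc, single_mul_single, ordTwo_mul_self (by omega), mul_one,
      ← one_def, one_mul]

lemma exists_norm_eq_ordTwo_pow_mul (hn : 2 ≤ n) (k : ℕ) {s : FC n} (hs1 : aug n s = 1)
    (hss : starTwo n hn s = s) :
    ∃ z : (FC n)ˣ, aug n (↑z : FC n) = 1 ∧
      single (ordTwo n) 1 ^ k * (s * s) = (↑z : FC n) * starTwo n hn ↑z := by
  have hz1 : aug n (A n ^ k * s) = 1 := by
    rw [map_mul, map_pow, hs1, mul_one, A, aug, lift_of, MonoidHom.one_apply, one_pow]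
  refine ⟨(isUnit_of_aug_eq_one hz1).unit, hz1, ?_⟩
  rw [IsUnit.unit_spec, map_mul, map_pow, hss, ← A_mul_starTwo_A hn, mul_pow]
  ring

lemma single_ordTwo_notMem_symmSq (hn : 3 ≤ n) :
    single (ordTwo n) 1 ∉ symmSq n (Nat.le_of_succ_le hn) := fun h => by
  have hh := ((mem_symmSq_iff hn).1 h).2.2.2
  rw [coeff_single, Finsupp.single_eq_same] at hh
  exact one_ne_zero hh

end NormsOfUnits

/-- For `C` cyclic of order `2^n`, `n ≥ 3`, with involution `⊛`:
`J^⊛ = { z z^⊛ : z ∈ V(F₂C), z z^⊛ ∈ F₂C² }` equals the direct product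
`⟨a^(2^(n-1))⟩ × S_⊛(C)²`, and `|S_⊛(C)²| = 2^(2^(n-2)-1)`. -/
theorem stmt18 (n : ℕ) (hn : 3 ≤ n) :
    {y : FC n | (∃ z : (FC n)ˣ, aug n (↑z : FC n) = 1 ∧
          y = (↑z : FC n) * starTwo n (by omega) ↑z) ∧ y ∈ sqSpan n}
      = {y : FC n | ∃ (k : ℕ) (s : (FC n)ˣ), aug n (↑s : FC n) = 1 ∧
          starTwo n (by omega) (↑s : FC n) = ↑s ∧
          y = ((A n) ^ (2 ^ (n - 1))) ^ k * ((↑s : FC n) * ↑s)} ∧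
    (A n) ^ (2 ^ (n - 1)) ∉
      {y : FC n | ∃ s : (FC n)ˣ, aug n (↑s : FC n) = 1 ∧
          starTwo n (by omega) (↑s : FC n) = ↑s ∧ y = (↑s : FC n) * ↑s} ∧
    Nat.card {y : FC n // ∃ s : (FC n)ˣ, aug n (↑s : FC n) = 1 ∧
          starTwo n (by omega) (↑s : FC n) = ↑s ∧ y = (↑s : FC n) * ↑s}
      = 2 ^ (2 ^ (n - 2) - 1) := by
  have hA : A n ^ 2 ^ (n - 1) = MonoidAlgebra.single (ordTwo n) 1 := by
    rw [A, ← map_pow]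
    rfl
  rw [hA]
  refine ⟨Set.ext fun y => ⟨?_, ?_⟩, single_ordTwo_notMem_symmSq hn, card_symmSq hn⟩
  · rintro ⟨⟨z, hz1, rfl⟩, hy⟩
    exact exists_eq_ordTwo_pow_mul_of_norm_mem_sqSpan hn hz1 hy
  · rintro ⟨k, s, hs1, hss, rfl⟩
    obtain ⟨z, hz1, hz⟩ := exists_norm_eq_ordTwo_pow_mul (by omega) k hs1 hss
    exact ⟨⟨z, hz1, hz⟩, (mem_sqSpan_iff _).2
      (((isSquare_single_ordTwo (by omega)).pow k).mul ⟨s, rfl⟩)⟩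

end
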